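/- arXiv:2111.14630 — 5 statements merged into one kernel-verified Lean document; each statement's English description precedes it below -/
import Mathlib

section
/- For every real number c, every n ∈ ℕ, and every finite family of reals x : Fin n → ℝ, there exists a rational number q such that for all i, x i > (q : ℝ) if and only if x i > c. Consequently, any finite sample whose Boolean labels are given by the threshold classifier 1_{>c} (i.e., y i = decide (x i > c)) is perfectly classified by the threshold classifier 1_{>q} at some rational q. -/
theorem Set.Finite.exists_gt_forall_le_of_gt {α : Type*} [LinearOrder α] [NoMaxOrder α]
    {s : Set α} (hs : s.Finite) (c : α) : ∃ d, c < d ∧ ∀ x ∈ s, c < x → d ≤ x := by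
  obtain ⟨d₀, hcd₀⟩ := exists_gt c
  -- `d₀` keeps the set nonempty when no point of `s` lies above `c`.
  obtain ⟨d, hd, hmin⟩ := Set.exists_min_image (insert d₀ (s ∩ Set.Ioi c)) id
    ((hs.inter_of_left _).insert d₀) (Set.insert_nonempty _ _)
  refine ⟨d, ?_, fun x hx hcx => hmin x (Or.inr ⟨hx, hcx⟩)⟩
  rcases hd with rfl | ⟨-, hcd⟩
  exacts [hcd₀, hcd]

theorem Set.Finite.exists_rat_lt_iff_lt {K : Type*} [Field K] [LinearOrder K]
    [IsStrictOrderedRing K] [Archimedean K] {s : Set K} (hs : s.Finite) (c : K) :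
    ∃ q : ℚ, ∀ x ∈ s, (q : K) < x ↔ c < x := by
  obtain ⟨d, hcd, hd⟩ := hs.exists_gt_forall_le_of_gt c
  obtain ⟨q, hcq, hqd⟩ := exists_rat_btwn hcd
  exact ⟨q, fun x hx => ⟨hcq.trans, fun hcx => hqd.trans_le (hd x hx hcx)⟩⟩

/-- For every real `c`, every `n`, and every finite family of reals
`x : Fin n → ℝ`, there is a rational `q` such that for all `i`, `x i > q ↔ x i > c`;
consequently any sample labeled by the threshold classifier `1_{>c}` is perfectly
classified by the threshold classifier `1_{>q}`. -/
theorem decision_stump_rational_threshold (c : ℝ) (n : ℕ) (x : Fin n → ℝ) :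
    ∃ q : ℚ, (∀ i : Fin n, x i > (q : ℝ) ↔ x i > c) ∧
      ∀ y : Fin n → Bool, (∀ i, y i = decide (x i > c)) →
        ∀ i, decide (x i > (q : ℝ)) = y i := by
  obtain ⟨q, hq⟩ := (Set.finite_range x).exists_rat_lt_iff_lt c
  have hcut : ∀ i, x i > (q : ℝ) ↔ x i > c := fun i => hq (x i) (Set.mem_range_self i)
  refine ⟨q, hcut, fun y hy i => ?_⟩
  rw [hy i, decide_eq_decide]
  exact hcut i
end

section
/- Let D ⊆ I be a dense subset and let S = ((x_1,y_1),...,(x_n,y_n)) ∈ (X × Bool)^n be a sample. If there exists w ∈ I with H w (x_j) = y_j for all j (i.e., the sample is realizable by the presented class), then there exists c ∈ D with H c (x_j) = y_j for all j. Hence, in the realizable case, a search through a countable dense set of indices always terminates with an index of a hypothesis of empirical error 0, yielding an empirical risk minimizer. -/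
theorem isOpen_setOf_forall_apply_eq {I X β ι : Type*} [TopologicalSpace I]
    [TopologicalSpace β] [DiscreteTopology β] [Finite ι]
    (H : I → X → β) (hH : ∀ x : X, Continuous fun i : I => H i x) (S : ι → X × β) :
    IsOpen {i : I | ∀ j, H i (S j).1 = (S j).2} := by
  simp only [Set.ofPred_forall]
  exact isOpen_iInter_of_finite fun j => (isOpen_discrete {(S j).2}).preimage (hH (S j).1)

/-- With `H : I → X → Bool` continuous in the index and `D ⊆ I`
dense, any sample realizable by the presented class (some index `w` fits all the
labels) is also fit exactly (empirical error 0) by some index `c ∈ D`. -/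
theorem dense_realizable_ERM {I X : Type*} [TopologicalSpace I]
    (H : I → X → Bool) (hH : ∀ x : X, Continuous fun i : I => H i x)
    (D : Set I) (hD : Dense D)
    (n : ℕ) (S : Fin n → X × Bool)
    (hreal : ∃ w : I, ∀ j : Fin n, H w (S j).1 = (S j).2) :
    ∃ c ∈ D, ∀ j : Fin n, H c (S j).1 = (S j).2 :=
  hD.exists_mem_open (isOpen_setOf_forall_apply_eq H hH S) hreal
end

section
/- Let I be nonempty, let D ⊆ I be a dense subset, and let S = ((x_1,y_1),...,(x_n,y_n)) ∈ (X × Bool)^n be any sample. Then there exists c ∈ D such that for every w ∈ I, the empirical error count of H c on S is less than or equal to the empirical error count of H w on S. In particular, the minimum empirical error over the whole class is attained at an ideal point. -/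
/-!
The error count of `H i` on a finite sample depends on `i` only through the finitely many labels
`H i x_j`, each of which is locally constant in `i`; so the count is locally constant. Its minimum
over the class is attained at some index, and the open set of indices with that minimal count meets
every dense set.
-/

def empiricalErrorCount {X : Type*} {n : ℕ} (S : Fin n → X × Bool) (h : X → Bool) : ℕ :=
  (Finset.univ.filter fun j : Fin n => h (S j).1 ≠ (S j).2).card

theorem isLocallyConstant_empiricalErrorCount {I X : Type*} [TopologicalSpace I]
    {H : I → X → Bool} (hH : ∀ x : X, Continuous fun i : I => H i x)
    {n : ℕ} (S : Fin n → X × Bool) :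
    IsLocallyConstant fun i => empiricalErrorCount S (H i) := by
  have hlabels : IsLocallyConstant fun i (j : Fin n) => H i (S j).1 :=
    (IsLocallyConstant.iff_continuous _).2 (continuous_pi fun j => hH (S j).1)
  exact hlabels.comp fun labels => (Finset.univ.filter fun j => labels j ≠ (S j).2).card

theorem Dense.exists_mem_eq_of_isLocallyConstant {I Y : Type*} [TopologicalSpace I]
    {D : Set I} (hD : Dense D) {f : I → Y} (hf : IsLocallyConstant f) (w : I) :
    ∃ c ∈ D, f c = f w :=
  hD.exists_mem_open (hf.isOpen_fiber (f w)) ⟨w, rfl⟩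

/-- With `I` nonempty, `H : I → X → Bool` continuous in the index
and `D ⊆ I` dense, for any sample `S` there is an ideal point `c ∈ D` whose
empirical error count on `S` is minimal over the whole class. -/
theorem dense_attains_min_empirical_error {I X : Type*} [TopologicalSpace I]
    [Nonempty I]
    (H : I → X → Bool) (hH : ∀ x : X, Continuous fun i : I => H i x)
    (D : Set I) (hD : Dense D)
    (n : ℕ) (S : Fin n → X × Bool) :
    ∃ c ∈ D, ∀ w : I,
      (Finset.univ.filter fun j : Fin n => H c (S j).1 ≠ (S j).2).card ≤
        (Finset.univ.filter fun j : Fin n => H w (S j).1 ≠ (S j).2).card := by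
  let err : I → ℕ := fun i => empiricalErrorCount S (H i)
  obtain ⟨c, hcD, hc⟩ := hD.exists_mem_eq_of_isLocallyConstant
    (isLocallyConstant_empiricalErrorCount hH S) (Function.argmin err)
  exact ⟨c, hcD, fun w => hc.trans_le (Function.argmin_le err w)⟩
end

section
/- Say that a code c halts on input 0 in exactly k steps if Nat.Partrec.Code.evaln k c 0 = none and Nat.Partrec.Code.evaln (k+1) c 0 is some value. For a code e with (e.eval 0).Dom, define h_e : Nat.Partrec.Code → Bool by h_e c = decide (∃ k, e halts on 0 in exactly k steps ∧ c halts on 0 in exactly k steps). Then the family F = {h_e : (e.eval 0).Dom} shatters no two-element set of codes: for all codes c₀, c₁ and all e, e' with (e.eval 0).Dom and (e'.eval 0).Dom, if h_e c₀ = true and h_e c₁ = false, then it is not the case that both h_{e'} c₀ = true and h_{e'} c₁ = true. Hence F has VC dimension at most 1. -/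
/-- A code `c` halts on input 0 in exactly `k` steps. -/
def HaltsExactly (c : Nat.Partrec.Code) (k : ℕ) : Prop :=
  Nat.Partrec.Code.evaln k c 0 = none ∧ (Nat.Partrec.Code.evaln (k + 1) c 0).isSome

/-- The classifier `h_e` associated to a (halting) code `e`:
`h_e c = decide (∃ k, e halts on 0 in exactly k steps ∧ c halts on 0 in exactly k steps)`. -/
noncomputable def hFam (e : Nat.Partrec.Code) (c : Nat.Partrec.Code) : Bool :=
  @decide (∃ k : ℕ, HaltsExactly e k ∧ HaltsExactly c k) (Classical.propDecidable _)

/-!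
`hFam e c = true` says that `e` and `c` halt in the same number of steps. Since a code halts
after at most one exact number of steps, this relation is symmetric and transitive. Hence if
`e'` agrees with both `c₀` and `c₁`, so does every `e` that agrees with `c₀`, and `{c₀, c₁}`
cannot be labelled `(true, false)`.
-/

namespace HaltsExactly

theorem le {c : Nat.Partrec.Code} {k k' : ℕ}
    (h : HaltsExactly c k) (h' : HaltsExactly c k') : k ≤ k' := by
  by_contra! hlt
  obtain ⟨a, ha⟩ := Option.isSome_iff_exists.mp h'.2
  have : Nat.Partrec.Code.evaln k c 0 = some a := Nat.Partrec.Code.evaln_mono hlt ha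
  simp [h.1] at this

theorem unique {c : Nat.Partrec.Code} {k k' : ℕ}
    (h : HaltsExactly c k) (h' : HaltsExactly c k') : k = k' :=
  le_antisymm (h.le h') (h'.le h)

end HaltsExactly

theorem hFam_eq_true_iff {e c : Nat.Partrec.Code} :
    hFam e c = true ↔ ∃ k, HaltsExactly e k ∧ HaltsExactly c k :=
  @decide_eq_true_iff _ (Classical.propDecidable _)

theorem hFam_symm {a b : Nat.Partrec.Code} (h : hFam a b = true) : hFam b a = true := by
  obtain ⟨k, ha, hb⟩ := hFam_eq_true_iff.mp h
  exact hFam_eq_true_iff.mpr ⟨k, hb, ha⟩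

theorem hFam_trans {a b c : Nat.Partrec.Code} (hab : hFam a b = true) (hbc : hFam b c = true) :
    hFam a c = true := by
  obtain ⟨k, ha, hb⟩ := hFam_eq_true_iff.mp hab
  obtain ⟨k', hb', hc⟩ := hFam_eq_true_iff.mp hbc
  obtain rfl := hb.unique hb'
  exact hFam_eq_true_iff.mpr ⟨k, ha, hc⟩

theorem halting_time_class_no_two_point_shatter_general
    (c₀ c₁ e e' : Nat.Partrec.Code)
    (h₀ : hFam e c₀ = true) (h₁ : hFam e c₁ = false) :
    ¬ (hFam e' c₀ = true ∧ hFam e' c₁ = true) := by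
  rintro ⟨h₀', h₁'⟩
  have : hFam e c₁ = true := hFam_trans (hFam_trans h₀ (hFam_symm h₀')) h₁'
  simp [h₁] at this

/-- The family `{h_e : (e.eval 0).Dom}` shatters no two-element set
of codes: if `h_e c₀ = true` and `h_e c₁ = false` for some halting code `e`, then
no halting code `e'` gives `h_{e'} c₀ = true` and `h_{e'} c₁ = true`.
Hence the family has VC dimension at most 1. -/
theorem halting_time_class_no_two_point_shatter
    (c₀ c₁ e e' : Nat.Partrec.Code)
    (he : (e.eval 0).Dom) (he' : (e'.eval 0).Dom)
    (h₀ : hFam e c₀ = true) (h₁ : hFam e c₁ = false) :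
    ¬ (hFam e' c₀ = true ∧ hFam e' c₁ = true) :=
  halting_time_class_no_two_point_shatter_general c₀ c₁ e e' h₀ h₁
end

section
/- Let X be a measurable space in which singletons are measurable, let x ∈ X and y ∈ Bool, and let D be the Dirac measure at (x, y) on X × Bool. Let m ∈ ℕ, let A : (Fin m → X × Bool) → X → Bool be a learner such that for every sample S the set {p ∈ X × Bool | A S p.1 ≠ p.2} is measurable and the set {S | D {p | A S p.1 ≠ p.2} ≤ ε} is measurable, and let ε, δ be reals with 0 ≤ ε < 1 and 0 ≤ δ < 1. If the m-fold product measure of D assigns measure at least 1 − δ to the set {S | D {p | A S p.1 ≠ p.2} ≤ ε}, then A applied to the constant sample (fun _ ↦ (x, y)) satisfies A (fun _ ↦ (x, y)) x = y. -/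
/-!
The `m`-fold product of the point mass at `(x, y)` is the point mass at the constant sample, so
the PAC event, having positive probability because `δ < 1`, contains that sample. On it the true
error is a Dirac mass, hence `0` or `1`, and being at most `ε < 1` it is `0`.
-/

open MeasureTheory Measure Set

theorem MeasureTheory.Measure.pi_dirac {ι : Type*} [Fintype ι] {α : ι → Type*}
    [∀ i, MeasurableSpace (α i)] (x : ∀ i, α i) :
    Measure.pi (fun i => dirac (x i)) = dirac x := by
  refine pi_eq fun s hs => ?_
  rw [dirac_apply' _ (MeasurableSet.univ_pi hs)]
  simp only [dirac_apply' _ (hs _), indicator, Pi.one_apply, Finset.prod_boole]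
  split_ifs <;> simp_all

theorem MeasureTheory.Measure.mem_of_dirac_apply_ne_zero {α : Type*} [MeasurableSpace α]
    {a : α} {s : Set α} (hs : MeasurableSet s) (h : dirac a s ≠ 0) : a ∈ s := by
  by_contra ha
  exact h (by rw [dirac_apply' a hs, indicator_of_notMem ha])

theorem const_mem_of_pi_dirac_apply_ne_zero {ι α : Type*} [Fintype ι] [MeasurableSpace α]
    {z : α} {T : Set (ι → α)} (hT : MeasurableSet T)
    (h : Measure.pi (fun _ : ι => dirac z) T ≠ 0) : (fun _ => z) ∈ T :=
  mem_of_dirac_apply_ne_zero hT (by rwa [← pi_dirac])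

theorem pac_learner_on_pointmass_labels_correctly_general
    {X : Type*} [MeasurableSpace X]
    (x : X) (y : Bool) (m : ℕ)
    (A : (Fin m → X × Bool) → X → Bool)
    (ε δ : ℝ) (hε1 : ε < 1) (hδ1 : δ < 1)
    (D : Measure (X × Bool)) (hD : D = Measure.dirac (x, y))
    (hmeas2 : MeasurableSet {S : Fin m → X × Bool |
      D {p : X × Bool | A S p.1 ≠ p.2} ≤ ENNReal.ofReal ε})
    (hPAC : ENNReal.ofReal (1 - δ) ≤
      Measure.pi (fun _ : Fin m => D)
        {S : Fin m → X × Bool |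
          D {p : X × Bool | A S p.1 ≠ p.2} ≤ ENNReal.ofReal ε}) :
    A (fun _ => (x, y)) x = y := by
  subst hD
  have hgood_pos := (ENNReal.ofReal_pos.2 (by linarith)).trans_le hPAC
  have hconst_good : dirac (x, y) {p : X × Bool | A (fun _ => (x, y)) p.1 ≠ p.2}
      ≤ ENNReal.ofReal ε :=
    const_mem_of_pi_dirac_apply_ne_zero hmeas2 hgood_pos.ne'
  by_contra hwrong
  rw [dirac_apply_of_mem hwrong] at hconst_good
  exact (ENNReal.ofReal_lt_one.2 hε1).not_ge hconst_good

/-- If `D` is the Dirac measure at `(x, y)` on `X × Bool` and a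
learner `A` (with the stated measurability properties) satisfies the PAC
condition at sample size `m` with parameters `0 ≤ ε < 1`, `0 ≤ δ < 1` — i.e. the
`m`-fold product of `D` gives measure at least `1 − δ` to the samples on which
`A` has true error at most `ε` — then `A` trained on the constant sample
`fun _ ↦ (x, y)` labels `x` by `y`. -/
theorem pac_learner_on_pointmass_labels_correctly
    {X : Type*} [MeasurableSpace X] [MeasurableSingletonClass X]
    (x : X) (y : Bool) (m : ℕ)
    (A : (Fin m → X × Bool) → X → Bool)
    (ε δ : ℝ) (hε0 : 0 ≤ ε) (hε1 : ε < 1) (hδ0 : 0 ≤ δ) (hδ1 : δ < 1)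
    (D : Measure (X × Bool)) (hD : D = Measure.dirac (x, y))
    (hmeas1 : ∀ S : Fin m → X × Bool,
      MeasurableSet {p : X × Bool | A S p.1 ≠ p.2})
    (hmeas2 : MeasurableSet {S : Fin m → X × Bool |
      D {p : X × Bool | A S p.1 ≠ p.2} ≤ ENNReal.ofReal ε})
    (hPAC : ENNReal.ofReal (1 - δ) ≤
      Measure.pi (fun _ : Fin m => D)
        {S : Fin m → X × Bool |
          D {p : X × Bool | A S p.1 ≠ p.2} ≤ ENNReal.ofReal ε}) :
    A (fun _ => (x, y)) x = y :=
  pac_learner_on_pointmass_labels_correctly_general x y m A ε δ hε1 hδ1 D hD hmeas2 hPAC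
end
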